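/- Let (A, f) be an indecomposable finite-dimensional commutative Frobenius algebra over a field of characteristic 0. Then the annihilator of the nilradical N(A) of A equals the principal ideal generated by the Euler class: ann(N(A)) = A · e_{A,f}. -/

import Mathlib

open Module

/-- The annihilator of an ideal in a Frobenius algebra is its orthogonal complement,
so the finranks are complementary. -/
theorem frob_ann_finrank (K A : Type) [Field K] [CommRing A] [Algebra K A] [FiniteDimensional K A]
    (f : A →ₗ[K] K) (hf : ∀ a : A, (∀ b : A, f (a * b) = 0) → a = 0) (I : Ideal A) :
    finrank K (Submodule.restrictScalars K I.annihilator) +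
      finrank K (Submodule.restrictScalars K I) = finrank K A := by
  set Φ : A →ₗ[K] Module.Dual K A := (LinearMap.llcomp K A A K f).comp (LinearMap.mul K A) with hΦ
  have hΦapp : ∀ a b : A, Φ a b = f (a * b) := fun a b => rfl
  have hinj : Function.Injective Φ := by
    rw [← LinearMap.ker_eq_bot, LinearMap.ker_eq_bot']
    intro a ha
    exact hf a fun b => by rw [← hΦapp, ha]; rfl
  have hbij : Function.Bijective Φ :=
    ⟨hinj, (LinearMap.injective_iff_surjective_of_finrank_eq_finrank
      (Subspace.dual_finrank_eq (V := A)).symm).mp hinj⟩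
  set eΦ : A ≃ₗ[K] Module.Dual K A := LinearEquiv.ofBijective Φ hbij with heΦ
  set W : Subspace K A := Submodule.restrictScalars K I with hW
  have key : Submodule.restrictScalars K I.annihilator = W.dualAnnihilator.comap Φ := by
    ext a
    simp only [Submodule.restrictScalars_mem, Submodule.mem_comap, Submodule.mem_dualAnnihilator]
    constructor
    · intro h w hw
      rw [hΦapp]
      have : a * w = 0 := Submodule.mem_annihilator.mp h w hw
      rw [this, map_zero]
    · intro h
      rw [Submodule.mem_annihilator]
      intro x hx
      refine hf _ fun b => ?_
      have hxb : x * b ∈ W := I.mul_mem_right b hx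
      have := h (x * b) hxb
      rw [hΦapp] at this
      rw [smul_eq_mul, mul_assoc]
      exact this
  have hfr : finrank K (Submodule.comap Φ W.dualAnnihilator) = finrank K W.dualAnnihilator := by
    have h0 : Submodule.comap Φ W.dualAnnihilator
        = Submodule.comap (eΦ : A →ₗ[K] Module.Dual K A) W.dualAnnihilator := rfl
    rw [h0]
    exact LinearEquiv.finrank_eq (LinearEquiv.ofSubmodule' eΦ W.dualAnnihilator)
  rw [key, hfr, (LinearEquiv.finrank_eq W.quotEquivAnnihilator).symm]
  exact Submodule.finrank_quotient_add_finrank W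

/-- Double annihilator property for ideals in a Frobenius algebra. -/
theorem frob_double_ann (K A : Type) [Field K] [CommRing A] [Algebra K A] [FiniteDimensional K A]
    (f : A →ₗ[K] K) (hf : ∀ a : A, (∀ b : A, f (a * b) = 0) → a = 0)
    (I : Ideal A) : I.annihilator.annihilator = I := by
  have hle : I ≤ I.annihilator.annihilator := by
    intro x hx
    rw [Submodule.mem_annihilator]
    intro n hn
    rw [smul_eq_mul, mul_comm, ← smul_eq_mul]
    exact Submodule.mem_annihilator.mp hn x hx
  have h1 := frob_ann_finrank K A f hf I
  have h2 := frob_ann_finrank K A f hf I.annihilator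
  have hdim : finrank K (Submodule.restrictScalars K I.annihilator.annihilator)
      = finrank K (Submodule.restrictScalars K I) := by omega
  have := Submodule.eq_of_le_of_finrank_le
    (S₁ := Submodule.restrictScalars K I)
    (S₂ := Submodule.restrictScalars K I.annihilator.annihilator)
    hle hdim.le
  exact (Submodule.restrictScalars_injective K A A this).symm

/-- In a finite-dimensional commutative algebra with no nontrivial idempotents,
every element is either nilpotent or a unit. -/
theorem nilp_or_unit (K A : Type) [Field K] [CommRing A] [Algebra K A] [FiniteDimensional K A]
    (hind : ∀ x : A, IsIdempotentElem x → x = 0 ∨ x = 1) (x : A) :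
    IsNilpotent x ∨ IsUnit x := by
  have hmono : ∀ p q : ℕ, p ≤ q →
      Submodule.restrictScalars K (Ideal.span {x ^ q}) ≤
        Submodule.restrictScalars K (Ideal.span {x ^ p}) := by
    intro p q hpq y hy
    exact Ideal.span_singleton_le_span_singleton.mpr (pow_dvd_pow x hpq) hy
  set F : ℕ →o (Submodule K A)ᵒᵈ :=
    ⟨fun n => OrderDual.toDual (Submodule.restrictScalars K (Ideal.span {x ^ n})),
      fun p q hpq => hmono p q hpq⟩ with hF
  obtain ⟨n₀, hn₀⟩ := IsArtinian.monotone_stabilizes F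
  set n := n₀ + 1 with hn
  have hstab : Ideal.span {x ^ n} = Ideal.span {x ^ (2 * n)} := by
    have e1 := hn₀ n (by omega)
    have e2 := hn₀ (2 * n) (by omega)
    have : Submodule.restrictScalars K (Ideal.span {x ^ n})
        = Submodule.restrictScalars K (Ideal.span {x ^ (2 * n)}) := by
      have := e1.symm.trans e2
      exact congrArg OrderDual.ofDual this
    exact Submodule.restrictScalars_injective K A A this
  have hmem : x ^ n ∈ Ideal.span ({x ^ (2 * n)} : Set A) := by
    rw [← hstab]; exact Ideal.subset_span rfl
  obtain ⟨c, hc⟩ := Ideal.mem_span_singleton'.mp hmem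
  have h2n : x ^ (2 * n) = x ^ n * x ^ n := by rw [two_mul, pow_add]
  set u := c * x ^ n with hu
  have hidem : IsIdempotentElem u := by
    show u * u = u
    calc u * u = c * (c * (x ^ n * x ^ n)) := by ring
    _ = c * (c * x ^ (2 * n)) := by rw [h2n]
    _ = c * x ^ n := by rw [hc]
  rcases hind u hidem with h0 | h1
  · left
    refine ⟨n, ?_⟩
    have : x ^ n = u * x ^ n := by
      rw [hu]
      calc x ^ n = c * x ^ (2 * n) := hc.symm
      _ = c * x ^ n * x ^ n := by rw [h2n, mul_assoc]
    rw [this, h0, zero_mul]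
  · right
    refine IsUnit.of_mul_eq_one (a := x) (c * x ^ n₀) ?_
    calc x * (c * x ^ n₀) = c * (x * x ^ n₀) := by ring
    _ = c * x ^ n := by rw [hn, pow_succ, mul_comm (x ^ n₀) x]
    _ = 1 := h1

/-- The trace of multiplication by `z` equals `f (z * e)` where `e` is the Euler class. -/
theorem frob_trace (K A : Type) [Field K] [CommRing A] [Algebra K A]
    [FiniteDimensional K A]
    (f : A →ₗ[K] K)
    (ι : Type) [Fintype ι] [DecidableEq ι] (e : Basis ι K A) (d : ι → A)
    (hd : ∀ i j, f (e i * d j) = if i = j then (1 : K) else 0) (z : A) :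
    LinearMap.trace K A (LinearMap.mul K A z) = f (z * ∑ i, e i * d i) := by
  have hrepr : ∀ (a : A) (j : ι), e.repr a j = f (a * d j) := by
    intro a j
    conv_rhs => rw [← Basis.sum_repr e a]
    rw [Finset.sum_mul, map_sum]
    have : ∀ i, f (e.repr a i • e i * d j) = e.repr a i * f (e i * d j) := by
      intro i
      rw [smul_mul_assoc, map_smul, smul_eq_mul]
    simp only [this, hd, mul_ite, mul_one, mul_zero]
    rw [Finset.sum_ite_eq' Finset.univ j (fun i => e.repr a i)]
    simp
  rw [LinearMap.trace_eq_matrix_trace K e, Matrix.trace]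
  have hdiag : ∀ i, (LinearMap.toMatrix e e (LinearMap.mul K A z)).diag i
      = f (z * (e i * d i)) := by
    intro i
    rw [Matrix.diag, LinearMap.toMatrix_apply, LinearMap.mul_apply', hrepr, mul_assoc]
  rw [Finset.sum_congr rfl fun i _ => hdiag i, Finset.mul_sum, map_sum]

/-- For an indecomposable finite-dimensional commutative Frobenius algebra, the
annihilator of the nilradical is the principal ideal generated by the Euler class. -/
theorem ann_nilradical_eq_span_euler (K A : Type) [Field K] [CharZero K]
    [CommRing A] [Algebra K A] [FiniteDimensional K A] [Nontrivial A]
    (hind : ∀ x : A, IsIdempotentElem x → x = 0 ∨ x = 1)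
    (f : A →ₗ[K] K)
    (hf : ∀ a : A, (∀ b : A, f (a * b) = 0) → a = 0)
    (ι : Type) [Fintype ι] [DecidableEq ι] (e : Basis ι K A) (d : ι → A)
    (hd : ∀ i j, f (e i * d j) = if i = j then (1 : K) else 0) :
    ∀ a : A, (∀ x : A, IsNilpotent x → a * x = 0) ↔ ∃ b : A, a = b * (∑ i, e i * d i) := by
  set E : A := ∑ i, e i * d i with hE
  -- E kills every nilpotent element
  have hEnil : ∀ x : A, IsNilpotent x → E * x = 0 := by
    intro x hx
    refine hf _ fun b => ?_
    have h1 : E * x * b = x * b * E := by ring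
    have h2 : IsNilpotent (x * b) := (Commute.all x b).isNilpotent_mul_right hx
    rw [h1, ← frob_trace K A f ι e d hd]
    exact (LinearMap.isNilpotent_trace_of_isNilpotent (h2.map (Algebra.lmul K A))).eq_zero
  -- f E ≠ 0 (it equals the trace of the identity, i.e. the dimension), hence E ≠ 0
  have hfE : f E ≠ 0 := by
    have h1 : f (1 * E) = LinearMap.trace K A (LinearMap.mul K A 1) :=
      (frob_trace K A f ι e d hd 1).symm
    rw [one_mul] at h1
    have h2 : LinearMap.mul K A 1 = LinearMap.id := by
      ext b; simp [LinearMap.mul_apply']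
    rw [h1, h2, LinearMap.trace_id]
    exact Nat.cast_ne_zero.mpr (finrank_pos (R := K) (M := A)).ne'
  have hEne : E ≠ 0 := fun h => hfE (by rw [h, map_zero])
  -- the annihilator of the ideal (E) is the nilradical
  have hannE : (Ideal.span {E}).annihilator = nilradical A := by
    apply le_antisymm
    · intro x hx
      have hxE : x * E = 0 := by
        rw [← smul_eq_mul]
        exact (Submodule.mem_annihilator_span_singleton E x).mp hx
      rw [mem_nilradical]
      by_contra hnx
      rcases nilp_or_unit K A hind x with h | h
      · exact hnx h
      · exact hEne (h.mul_left_cancel (by rw [mul_zero, hxE]))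
    · intro x hx
      rw [mem_nilradical] at hx
      refine (Submodule.mem_annihilator_span_singleton E x).mpr ?_
      rw [smul_eq_mul, mul_comm]
      exact hEnil x hx
  -- by the double annihilator property, (E) is the annihilator of the nilradical
  have hspan : Ideal.span {E} = (nilradical A).annihilator := by
    rw [← hannE]
    exact (frob_double_ann K A f hf (Ideal.span {E})).symm
  intro a
  constructor
  · intro h
    have ha : a ∈ (nilradical A).annihilator := by
      rw [Submodule.mem_annihilator]
      intro n hn
      rw [smul_eq_mul]
      exact h n (mem_nilradical.mp hn)
    rw [← hspan] at ha
    obtain ⟨b, hb⟩ := Ideal.mem_span_singleton'.mp ha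
    exact ⟨b, hb.symm⟩
  · rintro ⟨b, rfl⟩ x hx
    rw [mul_assoc, hEnil x hx, mul_zero]
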